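/- Suppose for each player i there is a strict partial order ≻_i on play sequences extending the knight order <K_i of player i, and the preference at each turn t is ≺_t = ≻_{P t} (all players are gallant knights). Consider also the all-lout game with reversed turn order Q t = P (m+1−t), and let b be its greedy play. Then for every optimal play a of the knight game and every player i, the plate A_i(a) computed with turn order P equals the plate of player i under b computed with turn order Q. In particular, the division of the food among gallant knights playing in turn sequence P 1, …, P m is the same as the division among boorish louts playing in the reversed turn sequence P m, …, P 1. -/

import Mathlib

/-- The plate of player `i` under play sequence `a`, with turn order `P`. -/
def plate {M : Type*} [DecidableEq M] {m k : ℕ} (P : Fin m → Fin k) (a : Fin m → M)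
    (i : Fin k) : Finset M :=
  (Finset.univ.filter fun t => P t = i).image a

/-- Pairwise comparison of plates with respect to a morsel ordering `le`. -/
def PlateLE {M : Type*} (le : M → M → Prop) (A B : Finset M) : Prop :=
  ∃ f : A → B, Function.Bijective f ∧ ∀ x : A, le x.1 (f x).1

/-- Strict pairwise comparison of plates. -/
def PlateLT {M : Type*} (le : M → M → Prop) (A B : Finset M) : Prop :=
  PlateLE le A B ∧ A ≠ B

/-- The knight order of player `i` on play sequences. -/
def KnightLT {M : Type*} [DecidableEq M] {m k : ℕ} (P : Fin m → Fin k)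
    (ord : Fin k → LinearOrder M) (i : Fin k) (a b : Fin m → M) : Prop :=
  ((∀ j, j ≠ i → PlateLE (ord j).le (plate P a j) (plate P b j)) ∧
      ∃ j, j ≠ i ∧ PlateLT (ord j).le (plate P a j) (plate P b j)) ∨
    ((∀ j, j ≠ i → plate P a j = plate P b j) ∧
      PlateLT (ord i).le (plate P a i) (plate P b i))

/-- The lout order of player `i` on play sequences. -/
def LoutLT {M : Type*} {m k : ℕ} (P : Fin m → Fin k)
    (ord : Fin k → LinearOrder M) (i : Fin k) (a b : Fin m → M) : Prop :=
  ∃ t : Fin m, P t = i ∧ (∀ s : Fin m, s < t → a s = b s) ∧ (ord i).lt (a t) (b t)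

/-- A strategy profile: assigns to each duplicate-free history of length `< m` a
morsel not occurring in it. -/
structure Strategy (M : Type*) (m : ℕ) where
  choice : List M → M
  valid : ∀ h : List M, h.Nodup → h.length < m → choice h ∉ h

/-- Iteratively extend a history by the choices prescribed by `s`. -/
def Strategy.extend {M : Type*} {m : ℕ} (s : Strategy M m) : ℕ → List M → List M
  | 0, h => h
  | j + 1, h => Strategy.extend s j (h ++ [s.choice h])

/-- The contingent outcome of strategy profile `s` from history `h`, as a play
sequence. -/
def Strategy.play {M : Type*} {m : ℕ} (s : Strategy M m) (h : List M) : Fin m → M :=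
  fun t => (s.extend (m - h.length) h).getD t.val (s.choice [])

/-- Subgame perfect equilibrium with respect to preferences `pref t` at turn `t`. -/
def SPE {M : Type*} {m : ℕ}
    (pref : Fin m → (Fin m → M) → (Fin m → M) → Prop) (s : Strategy M m) : Prop :=
  ∀ t : Fin m, ∀ h : List M, h.Nodup → h.length = t.val →
    ∀ x : M, x ∉ h → ¬ pref t (s.play h) (s.play (h ++ [x]))

/-- Optimal plays: contingent outcomes of subgame perfect equilibria from the
empty history. -/
def OptimalPlay {M : Type*} {m : ℕ}
    (pref : Fin m → (Fin m → M) → (Fin m → M) → Prop) (a : Fin m → M) : Prop :=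
  ∃ s : Strategy M m, SPE pref s ∧ a = s.play []

/-- The greedy play: at each turn `t` the mover `P t` selects her favourite
remaining morsel. -/
def IsGreedy {M : Type*} {m k : ℕ} (P : Fin m → Fin k) (ord : Fin k → LinearOrder M)
    (a : Fin m → M) : Prop :=
  Function.Injective a ∧
    ∀ t : Fin m, ∀ x : M, (∀ s : Fin m, s < t → a s ≠ x) → x ≠ a t →
      (ord (P t)).lt x (a t)


/-! ### PlateLE machinery -/


namespace Aux
variable {M : Type*} [DecidableEq M] {le : M → M → Prop}

omit [DecidableEq M] in
theorem plateLE_refl (hrefl : ∀ x, le x x) (A : Finset M) : PlateLE le A A :=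
  ⟨id, Function.bijective_id, fun x => hrefl x.1⟩

theorem plateLE_insert {A B : Finset M} {a b : M} (ha : a ∉ A) (hb : b ∉ B)
    (hab : le a b) (h : PlateLE le A B) : PlateLE le (insert a A) (insert b B) := by
  obtain ⟨f, hf, hle⟩ := h
  set g : {x // x ∈ insert a A} → {x // x ∈ insert b B} := fun x =>
    if hx : x.1 ∈ A then ⟨(f ⟨x.1, hx⟩).1, Finset.mem_insert_of_mem (f ⟨x.1, hx⟩).2⟩
    else ⟨b, Finset.mem_insert_self _ _⟩ with hg
  have gval_mem : ∀ (x : {x // x ∈ insert a A}) (hx : x.1 ∈ A),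
      (g x).1 = (f ⟨x.1, hx⟩).1 := by
    intro x hx; simp only [hg, dif_pos hx]
  have gval_not : ∀ (x : {x // x ∈ insert a A}), x.1 ∉ A → (g x).1 = b := by
    intro x hx; simp only [hg, dif_neg hx]
  have hmem_a : ∀ (x : {x // x ∈ insert a A}), x.1 ∉ A → x.1 = a := by
    intro x hx
    rcases Finset.mem_insert.1 x.2 with h | h
    · exact h
    · exact absurd h hx
  refine ⟨g, ⟨?_, ?_⟩, ?_⟩
  · intro x₁ x₂ heq
    have hval : (g x₁).1 = (g x₂).1 := congrArg Subtype.val heq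
    by_cases h1 : x₁.1 ∈ A <;> by_cases h2 : x₂.1 ∈ A
    · rw [gval_mem x₁ h1, gval_mem x₂ h2] at hval
      have h3 : f ⟨x₁.1, h1⟩ = f ⟨x₂.1, h2⟩ := Subtype.ext hval
      have h4 := congrArg Subtype.val (hf.1 h3)
      exact Subtype.ext h4
    · rw [gval_mem x₁ h1, gval_not x₂ h2] at hval
      exact absurd (hval ▸ (f ⟨x₁.1, h1⟩).2) hb
    · rw [gval_not x₁ h1, gval_mem x₂ h2] at hval
      exact absurd (hval ▸ (f ⟨x₂.1, h2⟩).2) hb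
    · exact Subtype.ext ((hmem_a x₁ h1).trans (hmem_a x₂ h2).symm)
  · rintro ⟨y, hy⟩
    rcases Finset.mem_insert.1 hy with rfl | hyB
    · refine ⟨⟨a, Finset.mem_insert_self _ _⟩, ?_⟩
      exact Subtype.ext (gval_not ⟨a, Finset.mem_insert_self _ _⟩ ha)
    · obtain ⟨⟨x, hx⟩, hfx⟩ := hf.2 ⟨y, hyB⟩
      refine ⟨⟨x, Finset.mem_insert_of_mem hx⟩, Subtype.ext ?_⟩
      rw [gval_mem ⟨x, Finset.mem_insert_of_mem hx⟩ hx]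
      exact congrArg Subtype.val hfx
  · intro x
    by_cases h1 : x.1 ∈ A
    · rw [gval_mem x h1]; exact hle ⟨x.1, h1⟩
    · rw [gval_not x h1, hmem_a x h1]; exact hab

theorem plateLE_union (hrefl : ∀ x, le x x) {A B : Finset M} (C : Finset M)
    (hCA : Disjoint C A) (hCB : Disjoint C B) (h : PlateLE le A B) :
    PlateLE le (C ∪ A) (C ∪ B) := by
  classical
  induction C using Finset.induction_on with
  | empty => simpa using h
  | @insert c C hc ih =>
    have hCA' : Disjoint C A := (Finset.disjoint_insert_left.1 hCA).2
    have hCB' : Disjoint C B := (Finset.disjoint_insert_left.1 hCB).2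
    have hcA : c ∉ A := (Finset.disjoint_insert_left.1 hCA).1
    have hcB : c ∉ B := (Finset.disjoint_insert_left.1 hCB).1
    have h1 : c ∉ C ∪ A := by simp [hc, hcA]
    have h2 : c ∉ C ∪ B := by simp [hc, hcB]
    simpa [Finset.insert_union] using plateLE_insert h1 h2 (hrefl c) (ih hCA' hCB')

theorem plateLE_singleton {a b : M} (hab : le a b) : PlateLE le ({a} : Finset M) {b} := by
  have : PlateLE le (∅ : Finset M) ∅ := ⟨id, Function.bijective_id, fun x => absurd x.2 (Finset.notMem_empty _)⟩
  simpa using plateLE_insert (by simp) (by simp) hab this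

end Aux

section
set_option linter.unusedSectionVars false
variable {M : Type*} [DecidableEq M] {k : ℕ} (ord : Fin k → LinearOrder M)

/-- max of a finset in player `p`'s order -/
def fmax (p : Fin k) (S : Finset M) (hS : S.Nonempty) : M := @Finset.max' M (ord p) S hS

lemma fmax_mem {p : Fin k} {S : Finset M} (hS : S.Nonempty) : fmax ord p S hS ∈ S :=
  @Finset.max'_mem M (ord p) S hS

lemma le_fmax {p : Fin k} {S : Finset M} (hS : S.Nonempty) {x : M} (hx : x ∈ S) :
    (ord p).le x (fmax ord p S hS) := @Finset.le_max' M (ord p) S x hx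

lemma fmax_subset {p : Fin k} {S T : Finset M} (hT : T.Nonempty) (hS : S.Nonempty)
    (hTS : T ⊆ S) (hmem : fmax ord p S hS ∈ T) : fmax ord p T hT = fmax ord p S hS := by
  refine @le_antisymm M (ord p).toPartialOrder _ _ ?_ ?_
  · exact @Finset.max'_le M (ord p) T hT _ (fun y hy => le_fmax ord hS (hTS hy))
  · exact le_fmax ord hT hmem

/-- greedy picks: each player in the list picks her max of the remaining set -/
def lg : List (Fin k) → Finset M → List M
  | [], _ => []
  | p :: R, S =>
    if hS : S.Nonempty then fmax ord p S hS :: lg R (S.erase (fmax ord p S hS)) else []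

@[simp] lemma lg_nil (S : Finset M) : lg ord [] S = [] := rfl

lemma lg_cons {p : Fin k} {R : List (Fin k)} {S : Finset M} (hS : S.Nonempty) :
    lg ord (p :: R) S = fmax ord p S hS :: lg ord R (S.erase (fmax ord p S hS)) := by
  simp [lg, hS]

lemma mem_lg {R : List (Fin k)} {S : Finset M} {x : M} (hx : x ∈ lg ord R S) : x ∈ S := by
  induction R generalizing S with
  | nil => simp at hx
  | cons p R ih =>
    by_cases hS : S.Nonempty
    · rw [lg_cons ord hS] at hx
      rcases List.mem_cons.1 hx with rfl | hx
      · exact fmax_mem ord hS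
      · exact Finset.mem_of_mem_erase (ih hx)
    · simp [lg, hS] at hx

lemma lg_length {R : List (Fin k)} {S : Finset M} (h : R.length ≤ S.card) :
    (lg ord R S).length = R.length := by
  induction R generalizing S with
  | nil => simp
  | cons p R ih =>
    have hS : S.Nonempty := Finset.card_pos.1 (lt_of_lt_of_le (Nat.succ_pos _) h)
    rw [lg_cons ord hS]
    simp only [List.length_cons] at h ⊢
    have hc : R.length ≤ (S.erase (fmax ord p S hS)).card := by
      rw [Finset.card_erase_of_mem (fmax_mem ord hS)]; omega
    rw [ih hc]

lemma lg_nodup {R : List (Fin k)} {S : Finset M} : (lg ord R S).Nodup := by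
  induction R generalizing S with
  | nil => simp
  | cons p R ih =>
    by_cases hS : S.Nonempty
    · rw [lg_cons ord hS]
      refine List.nodup_cons.2 ⟨fun hmem => ?_, ih⟩
      exact (Finset.notMem_erase _ _) (mem_lg ord hmem)
    · simp [lg, hS]

/-- removing an unpicked morsel does not change the greedy picks -/
lemma lg_erase_unpicked {R : List (Fin k)} {S : Finset M} {u : M}
    (hcard : R.length < S.card) (hu : u ∉ lg ord R S) :
    lg ord R (S.erase u) = lg ord R S := by
  induction R generalizing S with
  | nil => simp
  | cons p R ih =>
    have hS : S.Nonempty := Finset.card_pos.1 (lt_of_le_of_lt (Nat.zero_le _) hcard)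
    simp only [List.length_cons] at hcard
    have hSu : (S.erase u).Nonempty := by
      rw [← Finset.card_pos]
      have h2 := Finset.pred_card_le_card_erase (s := S) (a := u)
      omega
    rw [lg_cons ord hS] at hu
    have hzu : fmax ord p S hS ≠ u := fun h => hu (by rw [h]; exact List.mem_cons_self)
    have hz_mem : fmax ord p S hS ∈ S.erase u :=
      Finset.mem_erase.2 ⟨hzu, fmax_mem ord hS⟩
    have hmax_eq : fmax ord p (S.erase u) hSu = fmax ord p S hS :=
      fmax_subset ord hSu hS (Finset.erase_subset _ _) hz_mem
    rw [lg_cons ord hSu, hmax_eq, lg_cons ord hS]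
    congr 1
    rw [Finset.erase_right_comm]
    refine ih ?_ (fun hmem => hu (List.mem_cons_of_mem _ hmem))
    rw [Finset.card_erase_of_mem (fmax_mem ord hS)]
    omega

/-- the plate of player `j` given movers `R` and picks `c` -/
def lplate : List (Fin k) → List M → Fin k → Finset M
  | p :: R, x :: c, j => if p = j then insert x (lplate R c j) else lplate R c j
  | _, _, _ => ∅

@[simp] lemma lplate_nil (c : List M) (j : Fin k) : lplate ([] : List (Fin k)) c j = ∅ := by
  cases c <;> rfl

@[simp] lemma lplate_nil' (R : List (Fin k)) (j : Fin k) : lplate R ([] : List M) j = ∅ := by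
  cases R <;> rfl

lemma lplate_cons (p : Fin k) (R : List (Fin k)) (x : M) (c : List M) (j : Fin k) :
    lplate (p :: R) (x :: c) j = if p = j then insert x (lplate R c j) else lplate R c j := rfl

lemma mem_lplate {R : List (Fin k)} {c : List M} {j : Fin k} {y : M}
    (hy : y ∈ lplate R c j) : y ∈ c := by
  induction R generalizing c with
  | nil => simp at hy
  | cons p R ih =>
    cases c with
    | nil => simp at hy
    | cons x c =>
      rw [lplate_cons] at hy
      by_cases hpj : p = j
      · rw [if_pos hpj] at hy
        rcases Finset.mem_insert.1 hy with rfl | hy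
        · exact List.mem_cons_self
        · exact List.mem_cons_of_mem _ (ih hy)
      · rw [if_neg hpj] at hy
        exact List.mem_cons_of_mem _ (ih hy)

lemma lplate_append {R₁ R₂ : List (Fin k)} {c₁ c₂ : List M} (h : R₁.length = c₁.length)
    (j : Fin k) : lplate (R₁ ++ R₂) (c₁ ++ c₂) j = lplate R₁ c₁ j ∪ lplate R₂ c₂ j := by
  induction R₁ generalizing c₁ with
  | nil =>
    cases c₁ with
    | nil => simp
    | cons x c => simp at h
  | cons p R ih =>
    cases c₁ with
    | nil => simp at h
    | cons x c =>
      simp only [List.length_cons] at h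
      have h' : R.length = c.length := by omega
      simp only [List.cons_append, lplate_cons, ih h']
      by_cases hpj : p = j
      · rw [if_pos hpj, if_pos hpj, Finset.insert_union]
      · rw [if_neg hpj, if_neg hpj]

end

section
set_option linter.unusedSectionVars false
variable {M : Type*} [DecidableEq M] {k : ℕ} (ord : Fin k → LinearOrder M)

lemma not_mem_lplate_lg {R R' : List (Fin k)} {T : Finset M} {j : Fin k} {z : M}
    (hz : z ∉ T) : z ∉ lplate R' (lg ord R T) j :=
  fun h => hz (mem_lg ord (mem_lplate h))

/-- Removing any morsel from the table weakly hurts every player under greedy play. -/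
theorem removal_hurts : ∀ (R : List (Fin k)) (S : Finset M) (x : M), x ∈ S →
    R.length < S.card → ∀ j,
    PlateLE (ord j).le (lplate R (lg ord R (S.erase x)) j) (lplate R (lg ord R S) j) := by
  intro R
  induction R with
  | nil =>
    intro S x hx hcard j
    simpa using Aux.plateLE_refl (fun y => @le_refl M (ord j).toPreorder y) ∅
  | cons p R ih =>
    intro S x hx hcard j
    simp only [List.length_cons] at hcard
    have hS : S.Nonempty := ⟨x, hx⟩
    set z := fmax ord p S hS with hz
    have hzmem : z ∈ S := fmax_mem ord hS
    have hcard' : R.length < (S.erase z).card := by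
      rw [Finset.card_erase_of_mem hzmem]; omega
    have hrS : lg ord (p :: R) S = z :: lg ord R (S.erase z) := lg_cons ord hS
    by_cases hxz : x = z
    · -- the removed morsel is the first greedy pick
      have hse : S.erase z = S.erase x := by rw [hxz]
      rw [hse] at hrS hcard'
      have hSx : (S.erase x).Nonempty := Finset.card_pos.1 (by
        rw [Finset.card_erase_of_mem hx]; omega)
      set w := fmax ord p (S.erase x) hSx with hw
      have hwmem : w ∈ S.erase x := fmax_mem ord hSx
      have hrSx : lg ord (p :: R) (S.erase x) = w :: lg ord R ((S.erase x).erase w) :=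
        lg_cons ord hSx
      have IH := ih (S.erase x) w hwmem hcard' j
      rw [hrS, hrSx, lplate_cons, lplate_cons]
      by_cases hpj : p = j
      · subst hpj
        rw [if_pos rfl, if_pos rfl]
        refine Aux.plateLE_insert ?_ ?_ ?_ IH
        · exact not_mem_lplate_lg ord (Finset.notMem_erase _ _)
        · exact not_mem_lplate_lg ord (hse ▸ Finset.notMem_erase z S)
        · exact le_fmax (p := p) ord hS (Finset.mem_of_mem_erase hwmem)
      · rw [if_neg hpj, if_neg hpj]; exact IH
    · -- the removed morsel is not the first greedy pick
      have hzx : z ∈ S.erase x := Finset.mem_erase.2 ⟨fun h => hxz h.symm, hzmem⟩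
      have hSx : (S.erase x).Nonempty := ⟨z, hzx⟩
      have hmax_eq : fmax ord p (S.erase x) hSx = z :=
        fmax_subset ord hSx hS (Finset.erase_subset _ _) hzx
      have hrSx : lg ord (p :: R) (S.erase x) = z :: lg ord R ((S.erase z).erase x) := by
        rw [lg_cons ord hSx, hmax_eq, Finset.erase_right_comm]
      have hxz' : x ∈ S.erase z := Finset.mem_erase.2 ⟨hxz, hx⟩
      have IH := ih (S.erase z) x hxz' hcard' j
      rw [hrS, hrSx, lplate_cons, lplate_cons]
      by_cases hpj : p = j
      · subst hpj
        rw [if_pos rfl, if_pos rfl]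
        refine Aux.plateLE_insert ?_ ?_ (@le_refl M (ord p).toPreorder z) IH
        · exact not_mem_lplate_lg ord (fun h => (Finset.mem_erase.1 (Finset.mem_of_mem_erase h)).1 rfl)
        · exact not_mem_lplate_lg ord (Finset.notMem_erase _ _)
      · rw [if_neg hpj, if_neg hpj]; exact IH

/-- If removing `x` leaves every other player's greedy plate unchanged, then
distinguished player `i` holding `x` does no better than holding the leftover
maximum `y`. -/
theorem cond_own (i : Fin k) : ∀ (R : List (Fin k)) (S : Finset M) (x y : M), x ∈ S →
    R.length < S.card →
    y ∈ S → y ∉ (lg ord R S).toFinset →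
    (∀ u ∈ S, u ∉ (lg ord R S).toFinset → (ord i).le u y) →
    (∀ j, j ≠ i → lplate R (lg ord R (S.erase x)) j = lplate R (lg ord R S) j) →
    PlateLE (ord i).le (insert x (lplate R (lg ord R (S.erase x)) i))
      (insert y (lplate R (lg ord R S) i)) := by
  intro R
  induction R with
  | nil =>
    intro S x y hx hcard hy1 hy2 hy3 hplates
    simp only [lg_nil, lplate_nil, List.toFinset_nil] at *
    exact Aux.plateLE_singleton (hy3 x hx (by simp))
  | cons p R ih =>
    intro S x y hx hcard hy1 hy2 hy3 hplates
    simp only [List.length_cons] at hcard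
    have hS : S.Nonempty := ⟨x, hx⟩
    set z := fmax ord p S hS with hz
    have hzmem : z ∈ S := fmax_mem ord hS
    have hcard' : R.length < (S.erase z).card := by
      rw [Finset.card_erase_of_mem hzmem]; omega
    have hrS : lg ord (p :: R) S = z :: lg ord R (S.erase z) := lg_cons ord hS
    -- leftover conditions descend
    have hyz : y ≠ z := by
      intro h; apply hy2; rw [hrS, h]; simp
    have hy2' : y ∉ (lg ord R (S.erase z)).toFinset := by
      intro h; apply hy2; rw [hrS]; simp [List.mem_toFinset.1 h]
    have hy1' : y ∈ S.erase z := Finset.mem_erase.2 ⟨hyz, hy1⟩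
    have hy3' : ∀ u ∈ S.erase z, u ∉ (lg ord R (S.erase z)).toFinset → (ord i).le u y := by
      intro u hu hun
      refine hy3 u (Finset.mem_of_mem_erase hu) ?_
      rw [hrS]
      simp only [List.toFinset_cons, Finset.mem_insert, List.mem_toFinset]
      push_neg
      exact ⟨(Finset.mem_erase.1 hu).1, fun h => hun (List.mem_toFinset.2 h)⟩
    by_cases hxz : x = z
    · have hse : S.erase z = S.erase x := by rw [hxz]
      rw [hse] at hrS hcard'
      by_cases hpi : p = i
      · -- the first mover is the distinguished player
        subst hpi
        have hSx : (S.erase x).Nonempty := Finset.card_pos.1 (by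
          rw [Finset.card_erase_of_mem hx]; omega)
        set w := fmax ord p (S.erase x) hSx with hw
        have hwmem : w ∈ S.erase x := fmax_mem ord hSx
        have hrSx : lg ord (p :: R) (S.erase x) = w :: lg ord R ((S.erase x).erase w) :=
          lg_cons ord hSx
        have hplates' : ∀ j, j ≠ p →
            lplate R (lg ord R ((S.erase x).erase w)) j = lplate R (lg ord R (S.erase x)) j := by
          intro j hj
          have := hplates j hj
          rw [hrS, hrSx, lplate_cons, lplate_cons, if_neg (fun h => hj h.symm),
            if_neg (fun h => hj h.symm)] at this
          exact this
        rw [hse] at hy1' hy2' hy3'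
        have IH := ih (S.erase x) w y hwmem hcard' hy1' hy2' hy3' hplates'
        rw [← hse] at IH
        have hwz : w ∈ S.erase z := hse ▸ hwmem
        rw [hrS, hrSx, lplate_cons, lplate_cons, if_pos rfl, if_pos rfl, hxz,
          Finset.insert_comm y z]
        refine Aux.plateLE_insert ?_ ?_ (@le_refl M (ord p).toPreorder z) IH
        · simp only [Finset.mem_insert]
          push_neg
          exact ⟨fun h => (Finset.mem_erase.1 hwz).1 h.symm,
            not_mem_lplate_lg ord (fun h =>
              (Finset.mem_erase.1 (Finset.mem_of_mem_erase h)).1 rfl)⟩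
        · simp only [Finset.mem_insert]
          push_neg
          exact ⟨fun h => hyz h.symm, not_mem_lplate_lg ord (Finset.notMem_erase _ _)⟩
      · -- impossible: another player's plate changed
        exfalso
        have hSx : (S.erase x).Nonempty := Finset.card_pos.1 (by omega)
        have h := hplates p (fun h => hpi h)
        have hzr : z ∈ lplate (p :: R) (lg ord (p :: R) S) p := by
          rw [hrS, lplate_cons, if_pos rfl]; exact Finset.mem_insert_self _ _
        rw [← h] at hzr
        exact (hse ▸ Finset.notMem_erase z S : z ∉ S.erase x)
          (mem_lg ord (mem_lplate hzr))
    · -- x is not the first greedy pick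
      have hzx : z ∈ S.erase x := Finset.mem_erase.2 ⟨fun h => hxz h.symm, hzmem⟩
      have hSx : (S.erase x).Nonempty := ⟨z, hzx⟩
      have hmax_eq : fmax ord p (S.erase x) hSx = z :=
        fmax_subset ord hSx hS (Finset.erase_subset _ _) hzx
      have hrSx : lg ord (p :: R) (S.erase x) = z :: lg ord R ((S.erase z).erase x) := by
        rw [lg_cons ord hSx, hmax_eq, Finset.erase_right_comm]
      have hxz' : x ∈ S.erase z := Finset.mem_erase.2 ⟨hxz, hx⟩
      have hplates' : ∀ j, j ≠ i →
          lplate R (lg ord R ((S.erase z).erase x)) j = lplate R (lg ord R (S.erase z)) j := by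
        intro j hj
        have := hplates j hj
        rw [hrS, hrSx, lplate_cons, lplate_cons] at this
        by_cases hpj : p = j
        · rw [if_pos hpj, if_pos hpj] at this
          have h1 : z ∉ lplate R (lg ord R ((S.erase z).erase x)) j :=
            not_mem_lplate_lg ord (fun h => (Finset.mem_erase.1 (Finset.mem_of_mem_erase h)).1 rfl)
          have h2 : z ∉ lplate R (lg ord R (S.erase z)) j :=
            not_mem_lplate_lg ord (Finset.notMem_erase _ _)
          have h3 := congrArg (fun s => Finset.erase s z) this
          simpa [Finset.erase_insert h1, Finset.erase_insert h2] using h3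
        · rwa [if_neg hpj, if_neg hpj] at this
      have IH := ih (S.erase z) x y hxz' hcard' hy1' hy2' hy3' hplates'
      rw [hrS, hrSx, lplate_cons, lplate_cons]
      by_cases hpi : p = i
      · rw [if_pos hpi, if_pos hpi]
        subst hpi
        rw [Finset.insert_comm x z, Finset.insert_comm y z]
        refine Aux.plateLE_insert ?_ ?_ (@le_refl M (ord p).toPreorder z) IH
        · simp only [Finset.mem_insert]
          push_neg
          exact ⟨fun h => hxz h.symm,
            not_mem_lplate_lg ord (fun h => (Finset.mem_erase.1 (Finset.mem_of_mem_erase h)).1 rfl)⟩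
        · simp only [Finset.mem_insert]
          push_neg
          exact ⟨fun h => hyz h.symm, not_mem_lplate_lg ord (Finset.notMem_erase _ _)⟩
      · rw [if_neg hpi, if_neg hpi]; exact IH

end

section
set_option linter.unusedSectionVars false
variable {M : Type*} [DecidableEq M] {k : ℕ} (ord : Fin k → LinearOrder M)

/-- The division of remaining food if the current mover `i` takes `v` and then the remaining
players (in reversed order `R`) divide the rest greedily. -/
def divAfter (i : Fin k) (R : List (Fin k)) (S : Finset M) (v : M) (j : Fin k) : Finset M :=
  if j = i then insert v (lplate R (lg ord R (S.erase v)) j)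
  else lplate R (lg ord R (S.erase v)) j

theorem key_lemma (i : Fin k) (R : List (Fin k)) (S : Finset M) (x y : M)
    (hx : x ∈ S) (hcard : R.length < S.card)
    (hy1 : y ∈ S) (hy2 : y ∉ (lg ord R S).toFinset)
    (hy3 : ∀ u ∈ S, u ∉ (lg ord R S).toFinset → (ord i).le u y) :
    (∀ j, divAfter ord i R S x j = divAfter ord i R S y j) ∨
    (((∀ j, j ≠ i → PlateLE (ord j).le (divAfter ord i R S x j) (divAfter ord i R S y j)) ∧
        ∃ j, j ≠ i ∧ PlateLE (ord j).le (divAfter ord i R S x j) (divAfter ord i R S y j) ∧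
          divAfter ord i R S x j ≠ divAfter ord i R S y j) ∨
      ((∀ j, j ≠ i → divAfter ord i R S x j = divAfter ord i R S y j) ∧
        PlateLE (ord i).le (divAfter ord i R S x i) (divAfter ord i R S y i) ∧
        divAfter ord i R S x i ≠ divAfter ord i R S y i)) := by
  classical
  have hYgone : lg ord R (S.erase y) = lg ord R S :=
    lg_erase_unpicked ord hcard (fun h => hy2 (List.mem_toFinset.2 h))
  have hweak : ∀ j, j ≠ i →
      PlateLE (ord j).le (divAfter ord i R S x j) (divAfter ord i R S y j) := by
    intro j hj
    unfold divAfter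
    rw [if_neg hj, if_neg hj, hYgone]
    exact removal_hurts ord R S x hx hcard j
  by_cases hall : ∀ j, divAfter ord i R S x j = divAfter ord i R S y j
  · exact Or.inl hall
  · push_neg at hall
    obtain ⟨j₀, hj₀⟩ := hall
    by_cases hoth : ∃ j, j ≠ i ∧ divAfter ord i R S x j ≠ divAfter ord i R S y j
    · obtain ⟨j, hj, hne⟩ := hoth
      exact Or.inr (Or.inl ⟨hweak, j, hj, hweak j hj, hne⟩)
    · push_neg at hoth
      have heq : ∀ j, j ≠ i → divAfter ord i R S x j = divAfter ord i R S y j := hoth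
      have hj₀i : j₀ = i := by
        by_contra h
        exact hj₀ (heq j₀ h)
      subst hj₀i
      have hplates : ∀ j, j ≠ j₀ →
          lplate R (lg ord R (S.erase x)) j = lplate R (lg ord R S) j := by
        intro j hj
        have := heq j hj
        unfold divAfter at this
        rw [if_neg hj, if_neg hj, hYgone] at this
        exact this
      have hle := cond_own ord j₀ R S x y hx hcard hy1 hy2 hy3 hplates
      refine Or.inr (Or.inr ⟨heq, ?_, hj₀⟩)
      unfold divAfter
      rw [if_pos rfl, if_pos rfl, hYgone]
      exact hle
end

section
set_option linter.unusedSectionVars false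
variable {M : Type*} {m : ℕ} (s : Strategy M m)

lemma Strategy.extend_length (j : ℕ) (h : List M) : (s.extend j h).length = h.length + j := by
  induction j generalizing h with
  | zero => rfl
  | succ j ih =>
    show (s.extend j (h ++ [s.choice h])).length = _
    rw [ih]; simp; omega

lemma Strategy.extend_prefix (j : ℕ) (h : List M) : h <+: s.extend j h := by
  induction j generalizing h with
  | zero => exact List.prefix_refl h
  | succ j ih =>
    exact List.IsPrefix.trans (List.prefix_append h [s.choice h]) (ih (h ++ [s.choice h]))

lemma Strategy.extend_nodup (j : ℕ) (h : List M) (hnd : h.Nodup) (hlen : h.length + j ≤ m) :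
    (s.extend j h).Nodup := by
  induction j generalizing h with
  | zero => exact hnd
  | succ j ih =>
    show (s.extend j (h ++ [s.choice h])).Nodup
    have hc : s.choice h ∉ h := s.valid h hnd (by omega)
    refine ih (h ++ [s.choice h]) ?_ (by simp; omega)
    exact List.Nodup.append hnd (List.nodup_singleton _)
      (by simpa [List.disjoint_singleton] using hc)

/-- The full play list from history `h`. -/
def Strategy.playList (h : List M) : List M := s.extend (m - h.length) h

lemma Strategy.playList_length (h : List M) (hlen : h.length ≤ m) :
    (s.playList h).length = m := by
  show (s.extend (m - h.length) h).length = m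
  rw [s.extend_length]; omega

lemma Strategy.playList_nodup (h : List M) (hnd : h.Nodup) (hlen : h.length ≤ m) :
    (s.playList h).Nodup := s.extend_nodup _ h hnd (by omega)

lemma Strategy.play_eq_get (h : List M) (hlen : h.length ≤ m) (t : Fin m) :
    s.play h t = (s.playList h).get ⟨t.val, by rw [s.playList_length h hlen]; exact t.isLt⟩ := by
  show (s.playList h).getD t.val (s.choice []) = _
  rw [List.getD_eq_getElem _ _ (by rw [s.playList_length h hlen]; exact t.isLt), List.get_eq_getElem]

lemma Strategy.play_inj (h : List M) (hnd : h.Nodup) (hlen : h.length ≤ m) :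
    Function.Injective (s.play h) := by
  intro t₁ t₂ he
  rw [s.play_eq_get h hlen, s.play_eq_get h hlen] at he
  have h2 := List.Nodup.get_inj_iff (s.playList_nodup h hnd hlen) |>.1 he
  have h3 := congrArg Fin.val h2
  exact Fin.ext h3

lemma Strategy.play_choice (h : List M) (hlen : h.length < m) :
    s.play (h ++ [s.choice h]) = s.play h := by
  funext t
  show (s.extend (m - (h ++ [s.choice h]).length) (h ++ [s.choice h])).getD t.val _
    = (s.extend (m - h.length) h).getD t.val _
  have h1 : m - h.length = (m - (h ++ [s.choice h]).length) + 1 := by simp; omega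
  rw [h1]
  rfl

lemma Strategy.play_prefix_val (h : List M) (hlen : h.length ≤ m) (t : Fin m)
    (ht : t.val < h.length) (d : M) : s.play h t = h.getD t.val d := by
  obtain ⟨r, hr⟩ := s.extend_prefix (m - h.length) h
  show (s.extend (m - h.length) h).getD t.val (s.choice []) = _
  rw [← hr]
  rw [List.getD_append _ _ _ _ ht, List.getD_eq_getElem _ _ ht, List.getD_eq_getElem _ _ ht]

lemma Strategy.play_last (h : List M) (x : M) (hlen : h.length < m) :
    s.play (h ++ [x]) ⟨h.length, hlen⟩ = x := by
  rw [s.play_prefix_val (h ++ [x]) (by simp; omega) _ (by simp) x]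
  simp

lemma Strategy.play_tail_not_mem (h : List M) (hnd : h.Nodup) (hlen : h.length ≤ m)
    (t : Fin m) (ht : h.length ≤ t.val) : s.play h t ∉ h := by
  intro hmem
  obtain ⟨j, hj, hjv⟩ := List.getElem_of_mem hmem
  obtain ⟨r, hr⟩ := s.extend_prefix (m - h.length) h
  have hLl := s.playList_length h hlen
  have hnodup := s.playList_nodup h hnd hlen
  have hjl : j < (s.playList h).length := by omega
  have hv : (s.playList h).get ⟨j, hjl⟩ = h[j] := by
    have hpre : h <+: s.playList h := s.extend_prefix _ _
    have : h[j] = (s.playList h)[j]'(by omega) := hpre.getElem hj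
    simp only [List.get_eq_getElem]
    exact this.symm
  have he : (s.playList h).get ⟨t.val, by omega⟩ = (s.playList h).get ⟨j, hjl⟩ := by
    rw [hv, hjv, s.play_eq_get h hlen t]
  have := List.Nodup.get_inj_iff hnodup |>.1 he
  have : t.val = j := congrArg Fin.val this
  omega

end

section
set_option linter.unusedSectionVars false
variable {M : Type*} [DecidableEq M] {m k : ℕ} (P : Fin m → Fin k)

/-- plate restricted to turns `≥ n` -/
def tailPlate (n : ℕ) (a : Fin m → M) (j : Fin k) : Finset M :=
  (Finset.univ.filter fun t : Fin m => n ≤ t.val ∧ P t = j).image a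

lemma tailPlate_zero (a : Fin m → M) (j : Fin k) : tailPlate P 0 a j = plate P a j := by
  unfold tailPlate plate
  congr 1
  ext t
  simp

lemma tailPlate_top (a : Fin m → M) (j : Fin k) : tailPlate P m a j = ∅ := by
  unfold tailPlate
  rw [Finset.filter_false_of_mem, Finset.image_empty]
  intro t _
  simp only [not_and]
  intro h
  exact absurd h (Nat.not_le.2 t.isLt)

lemma tailPlate_succ (n : ℕ) (hn : n < m) (a : Fin m → M) (j : Fin k) :
    tailPlate P n a j = if P ⟨n, hn⟩ = j then insert (a ⟨n, hn⟩) (tailPlate P (n+1) a j)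
      else tailPlate P (n+1) a j := by
  have hmem : ∀ u : M, (u ∈ tailPlate P n a j) ↔
      ((P ⟨n, hn⟩ = j ∧ a ⟨n, hn⟩ = u) ∨ u ∈ tailPlate P (n+1) a j) := by
    intro u
    unfold tailPlate
    simp only [Finset.mem_image, Finset.mem_filter, Finset.mem_univ, true_and]
    constructor
    · rintro ⟨t, ⟨hnt, hPt⟩, hat⟩
      rcases Nat.eq_or_lt_of_le hnt with heq | hlt
      · left
        have : t = ⟨n, hn⟩ := Fin.ext heq.symm
        subst this
        exact ⟨hPt, hat⟩
      · right; exact ⟨t, ⟨hlt, hPt⟩, hat⟩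
    · rintro (⟨hPt, hat⟩ | ⟨t, ⟨hnt, hPt⟩, hat⟩)
      · exact ⟨⟨n, hn⟩, ⟨le_refl n, hPt⟩, hat⟩
      · exact ⟨t, ⟨by omega, hPt⟩, hat⟩
  ext u
  rw [hmem]
  by_cases hq : P ⟨n, hn⟩ = j
  · simp [hq, eq_comm]
  · simp [hq]

/-- movers of turns `n, …, m-1` in reversed order -/
def revMov (n : ℕ) : List (Fin k) := (((List.finRange m).drop n).reverse).map P

lemma revMov_length (n : ℕ) : (revMov P n).length = m - n := by
  simp [revMov]

lemma revMov_succ (n : ℕ) (hn : n < m) : revMov P n = revMov P (n+1) ++ [P ⟨n, hn⟩] := by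
  unfold revMov
  rw [List.drop_eq_getElem_cons (by simpa using hn), List.reverse_cons, List.map_append]
  congr
  simp

lemma revMov_top : revMov P m = [] := by
  simp [revMov]

end

section
set_option linter.unusedSectionVars false
variable {M : Type*} [DecidableEq M] {k : ℕ} (ord : Fin k → LinearOrder M)

/-- appending one last mover to the greedy run -/
lemma lg_concat (i : Fin k) : ∀ (R : List (Fin k)) (S : Finset M), R.length < S.card →
    ∃ y, y ∈ S ∧ y ∉ (lg ord R S).toFinset ∧
      (∀ u ∈ S, u ∉ (lg ord R S).toFinset → (ord i).le u y) ∧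
      lg ord (R ++ [i]) S = lg ord R S ++ [y] := by
  intro R
  induction R with
  | nil =>
    intro S hcard
    have hS : S.Nonempty := Finset.card_pos.1 (by omega)
    refine ⟨fmax ord i S hS, fmax_mem ord hS, by simp, ?_, ?_⟩
    · intro u hu _
      exact le_fmax ord hS hu
    · rw [List.nil_append, lg_cons ord hS]
      simp
  | cons p R ih =>
    intro S hcard
    simp only [List.length_cons] at hcard
    have hS : S.Nonempty := Finset.card_pos.1 (by omega)
    set z := fmax ord p S hS with hz
    have hzmem : z ∈ S := fmax_mem ord hS
    have hcard' : R.length < (S.erase z).card := by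
      rw [Finset.card_erase_of_mem hzmem]; omega
    obtain ⟨y, hy1, hy2, hy3, hy4⟩ := ih (S.erase z) hcard'
    have hrS : lg ord (p :: R) S = z :: lg ord R (S.erase z) := lg_cons ord hS
    refine ⟨y, Finset.mem_of_mem_erase hy1, ?_, ?_, ?_⟩
    · rw [hrS]
      simp only [List.toFinset_cons, Finset.mem_insert, List.mem_toFinset]
      push_neg
      exact ⟨(Finset.mem_erase.1 hy1).1, fun h => hy2 (List.mem_toFinset.2 h)⟩
    · intro u hu hun
      rw [hrS] at hun
      simp only [List.toFinset_cons, Finset.mem_insert, List.mem_toFinset] at hun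
      push_neg at hun
      exact hy3 u (Finset.mem_erase.2 ⟨hun.1, hu⟩) (fun h => hun.2 (List.mem_toFinset.1 h))
    · rw [List.cons_append, lg_cons ord hS, hy4, hrS]
      simp [hz]
end

section
set_option linter.unusedSectionVars false
variable {M : Type*} [DecidableEq M] {m k : ℕ}

lemma plate_split (P : Fin m → Fin k) (s : Strategy M m) (h : List M) (v : M)
    (hnd : h.Nodup) (hv : v ∉ h) (hlen : h.length < m) (j : Fin k) (d : M) :
    plate P (s.play (h ++ [v])) j =
      ((Finset.univ.filter fun t : Fin m => t.val < h.length ∧ P t = j).image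
        (fun t : Fin m => h.getD t.val d)) ∪ tailPlate P h.length (s.play (h ++ [v])) j ∧
    Disjoint ((Finset.univ.filter fun t : Fin m => t.val < h.length ∧ P t = j).image
        (fun t : Fin m => h.getD t.val d)) (tailPlate P h.length (s.play (h ++ [v])) j) := by
  have hlen' : (h ++ [v]).length ≤ m := by simp; omega
  have hnd' : (h ++ [v]).Nodup := List.Nodup.append hnd (List.nodup_singleton v)
    (by simpa [List.disjoint_singleton] using hv)
  have hagree : ∀ t : Fin m, t.val < h.length → s.play (h ++ [v]) t = h.getD t.val d := by
    intro t ht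
    rw [s.play_prefix_val (h ++ [v]) hlen' t (by simp; omega) d,
      List.getD_append _ _ _ _ ht]
  have htail : ∀ t : Fin m, h.length ≤ t.val → s.play (h ++ [v]) t ∉ h := by
    intro t ht
    rcases Nat.eq_or_lt_of_le ht with heq | hlt
    · have : t = ⟨h.length, hlen⟩ := Fin.ext heq.symm
      rw [this, s.play_last h v hlen]
      exact hv
    · have hnm : (h ++ [v]).length ≤ t.val := by simp; omega
      have := s.play_tail_not_mem (h ++ [v]) hnd' hlen' t hnm
      intro hmem
      exact this (List.mem_append_left _ hmem)
  constructor
  · ext u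
    simp only [plate, tailPlate, Finset.mem_union, Finset.mem_image, Finset.mem_filter,
      Finset.mem_univ, true_and]
    constructor
    · rintro ⟨t, hPt, hat⟩
      by_cases ht : t.val < h.length
      · left; exact ⟨t, ⟨ht, hPt⟩, by rw [← hagree t ht]; exact hat⟩
      · right; exact ⟨t, ⟨by omega, hPt⟩, hat⟩
    · rintro (⟨t, ⟨ht, hPt⟩, hu⟩ | ⟨t, ⟨ht, hPt⟩, hu⟩)
      · exact ⟨t, hPt, by rw [hagree t ht]; exact hu⟩
      · exact ⟨t, hPt, hu⟩
  · rw [Finset.disjoint_left]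
    intro u hu1 hu2
    simp only [tailPlate, Finset.mem_image, Finset.mem_filter, Finset.mem_univ, true_and] at hu1 hu2
    obtain ⟨t1, ⟨ht1, _⟩, hu1⟩ := hu1
    obtain ⟨t2, ⟨ht2, _⟩, hu2⟩ := hu2
    have hmem : u ∈ h := by
      rw [← hu1, List.getD_eq_getElem _ _ ht1]
      exact List.getElem_mem _
    exact htail t2 ht2 (hu2 ▸ hmem)

end

section
set_option linter.unusedSectionVars false

theorem claimB {M : Type*} [Fintype M] [DecidableEq M] {m k : ℕ}
    (hm : m ≤ Fintype.card M) (P : Fin m → Fin k) (ord : Fin k → LinearOrder M)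
    (big : Fin k → (Fin m → M) → (Fin m → M) → Prop)
    (hext : ∀ i (a b : Fin m → M), Function.Injective a → Function.Injective b →
      KnightLT P ord i a b → big i a b)
    (s : Strategy M m) (hs : SPE (fun t => big (P t)) s) :
    ∀ (r : ℕ) (h : List M), h.Nodup → h.length + r = m → ∀ j,
      tailPlate P h.length (s.play h) j =
        lplate (revMov P h.length) (lg ord (revMov P h.length)
          (Finset.univ \ h.toFinset)) j := by
  intro r
  induction r with
  | zero =>
    intro h hnd hlen j
    have hl : h.length = m := by omega
    rw [hl, tailPlate_top, revMov_top]
    simp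
  | succ r ih =>
    intro h hnd hlen j
    have ht0 : h.length < m := by omega
    set t0 := h.length with hht0
    set i := P ⟨t0, ht0⟩ with hi
    set S : Finset M := Finset.univ \ h.toFinset with hSdef
    set R : List (Fin k) := revMov P (t0+1) with hRdef
    have hcardh : h.toFinset.card = t0 := List.toFinset_card_of_nodup hnd
    have hcardS : S.card = Fintype.card M - t0 := by
      rw [hSdef, Finset.card_sdiff_of_subset (Finset.subset_univ _), Finset.card_univ, hcardh]
    have hlenR : R.length = m - (t0+1) := revMov_length P (t0+1)
    have hcard : R.length < S.card := by omega
    have hSx : ∀ x : M, (Finset.univ \ (h ++ [x]).toFinset) = S.erase x := by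
      intro x
      ext u
      simp only [hSdef, Finset.mem_sdiff, Finset.mem_univ, true_and, Finset.mem_erase,
        List.toFinset_append, List.toFinset_cons, List.toFinset_nil, Finset.mem_union,
        Finset.mem_insert, Finset.notMem_empty, or_false, List.mem_toFinset]
      tauto
    -- divisions after each possible first pick
    have hdiv : ∀ x, x ∉ h → ∀ j,
        tailPlate P t0 (s.play (h ++ [x])) j = divAfter ord i R S x j := by
      intro x hx j
      have hnd' : (h ++ [x]).Nodup := List.Nodup.append hnd (List.nodup_singleton x)
        (by simpa [List.disjoint_singleton] using hx)
      have hlen' : (h ++ [x]).length + r = m := by simp; omega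
      have hIH := ih (h ++ [x]) hnd' hlen'
      have hlx : (h ++ [x]).length = t0 + 1 := by simp [hht0]
      rw [hlx] at hIH
      rw [tailPlate_succ P t0 ht0, s.play_last h x ht0, hIH j, hSx x]
      unfold divAfter
      by_cases hij : i = j
      · rw [if_pos hij, if_pos hij.symm]
      · rw [if_neg hij, if_neg (fun hh => hij hh.symm)]
    -- the distinguished leftover morsel
    obtain ⟨y, hy1, hy2, hy3, hy4⟩ := lg_concat ord i R S hcard
    have hyh : y ∉ h := by
      rw [hSdef] at hy1
      simp only [Finset.mem_sdiff, List.mem_toFinset] at hy1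
      exact hy1.2
    have hx' : s.choice h ∉ h := s.valid h hnd ht0
    have hx'S : s.choice h ∈ S := by
      rw [hSdef]; simp only [Finset.mem_sdiff, Finset.mem_univ, List.mem_toFinset, true_and]
      exact hx'
    have hkey := key_lemma ord i R S (s.choice h) y hx'S hcard hy1 hy2 hy3
    -- every division is in fact the reversed-greedy division
    have hall : ∀ j, divAfter ord i R S (s.choice h) j = divAfter ord i R S y j := by
      rcases hkey with hall | hbad
      · exact hall
      · exfalso
        set x' := s.choice h with hx'def
        set a' := s.play (h ++ [x']) with ha'
        set b' := s.play (h ++ [y]) with hb'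
        have hlen1 : (h ++ [x']).length ≤ m := by simp; omega
        have hlen2 : (h ++ [y]).length ≤ m := by simp; omega
        have hnd1 : (h ++ [x']).Nodup := List.Nodup.append hnd (List.nodup_singleton _)
          (by simpa [List.disjoint_singleton] using hx')
        have hnd2 : (h ++ [y]).Nodup := List.Nodup.append hnd (List.nodup_singleton _)
          (by simpa [List.disjoint_singleton] using hyh)
        have hinj1 : Function.Injective a' := s.play_inj _ hnd1 hlen1
        have hinj2 : Function.Injective b' := s.play_inj _ hnd2 hlen2
        set C : Fin k → Finset M := fun j =>
          ((Finset.univ.filter fun t : Fin m => t.val < t0 ∧ P t = j).image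
            (fun t : Fin m => h.getD t.val (s.choice []))) with hC
        have hsplit1 := fun j => plate_split P s h x' hnd hx' ht0 j (s.choice [])
        have hsplit2 := fun j => plate_split P s h y hnd hyh ht0 j (s.choice [])
        have hpa : ∀ j, plate P a' j = C j ∪ divAfter ord i R S x' j := by
          intro j
          rw [ha', (hsplit1 j).1, hdiv x' hx' j]
        have hpb : ∀ j, plate P b' j = C j ∪ divAfter ord i R S y j := by
          intro j
          rw [hb', (hsplit2 j).1, hdiv y hyh j]
        have hdisj1 : ∀ j, Disjoint (C j) (divAfter ord i R S x' j) := by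
          intro j
          have := (hsplit1 j).2
          rwa [hdiv x' hx' j] at this
        have hdisj2 : ∀ j, Disjoint (C j) (divAfter ord i R S y j) := by
          intro j
          have := (hsplit2 j).2
          rwa [hdiv y hyh j] at this
        -- lift PlateLE, equality, and inequality through the common part
        have hliftLE : ∀ j, PlateLE (ord j).le (divAfter ord i R S x' j)
            (divAfter ord i R S y j) → PlateLE (ord j).le (plate P a' j) (plate P b' j) := by
          intro j hle
          rw [hpa j, hpb j]
          exact Aux.plateLE_union (fun u => @le_refl M (ord j).toPreorder u) (C j)
            (hdisj1 j) (hdisj2 j) hle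
        have hliftEq : ∀ j, divAfter ord i R S x' j = divAfter ord i R S y j →
            plate P a' j = plate P b' j := by
          intro j he
          rw [hpa j, hpb j, he]
        have hliftNe : ∀ j, divAfter ord i R S x' j ≠ divAfter ord i R S y j →
            plate P a' j ≠ plate P b' j := by
          intro j hne he
          rw [hpa j, hpb j] at he
          apply hne
          have e1 : (C j ∪ divAfter ord i R S x' j) \ C j = divAfter ord i R S x' j :=
            Finset.union_sdiff_cancel_left (hdisj1 j)
          have e2 : (C j ∪ divAfter ord i R S y j) \ C j = divAfter ord i R S y j :=
            Finset.union_sdiff_cancel_left (hdisj2 j)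
          rw [← e1, ← e2, he]
        -- assemble KnightLT
        have hkn : KnightLT P ord i a' b' := by
          rcases hbad with ⟨hweak, j₁, hj₁, hle₁, hne₁⟩ | ⟨heq, hlei, hnei⟩
          · exact Or.inl ⟨fun j hj => hliftLE j (hweak j hj),
              j₁, hj₁, hliftLE j₁ hle₁, hliftNe j₁ hne₁⟩
          · exact Or.inr ⟨fun j hj => hliftEq j (heq j hj), hliftLE i hlei, hliftNe i hnei⟩
        have hbig : big i a' b' := hext i a' b' hinj1 hinj2 hkn
        have hnotbig := hs ⟨t0, ht0⟩ h hnd rfl y hyh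
        rw [← s.play_choice h ht0] at hnotbig
        exact hnotbig hbig
    -- conclude
    have hplay : s.play h = s.play (h ++ [s.choice h]) := (s.play_choice h ht0).symm
    have hYgone : lg ord R (S.erase y) = lg ord R S :=
      lg_erase_unpicked ord hcard (fun hh => hy2 (List.mem_toFinset.2 hh))
    rw [hplay, hdiv (s.choice h) hx' j, hall j, revMov_succ P t0 ht0, ← hRdef, ← hi, hy4,
      lplate_append (by rw [lg_length ord (le_of_lt hcard)]) j]
    unfold divAfter
    by_cases hij : j = i
    · rw [if_pos hij, hYgone, hij, lplate_cons, if_pos rfl]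
      simp only [lplate_nil']
      have he : insert y (∅ : Finset M) = {y} := rfl
      rw [he, Finset.insert_eq, Finset.union_comm]
    · rw [if_neg hij, hYgone, lplate_cons, if_neg (fun hh => hij hh.symm)]
      simp
end

section
set_option linter.unusedSectionVars false
variable {M : Type*} [Fintype M] [DecidableEq M] {m k : ℕ}

lemma greedy_eq_lg (hm : m ≤ Fintype.card M) (Q : Fin m → Fin k)
    (ord : Fin k → LinearOrder M) (b : Fin m → M) (hb : IsGreedy Q ord b) :
    ∀ (r n : ℕ), n + r = m →
      lg ord (List.map Q ((List.finRange m).drop n))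
        (Finset.univ \ (Finset.univ.filter (fun t : Fin m => t.val < n)).image b) =
      List.map b ((List.finRange m).drop n) := by
  intro r
  induction r with
  | zero =>
    intro n hn
    have hdrop : (List.finRange m).drop n = [] := by
      apply List.drop_eq_nil_of_le
      simp
      omega
    rw [hdrop]
    simp
  | succ r ih =>
    intro n hn
    have hnm : n < m := by omega
    set T : Finset M := (Finset.univ.filter (fun t : Fin m => t.val < n)).image b with hT
    have hTcard : T.card ≤ n := by
      refine le_trans Finset.card_image_le ?_
      have := Finset.card_le_card_of_injOn (f := fun t : Fin m => t.val)
        (s := Finset.univ.filter (fun t : Fin m => t.val < n)) (t := Finset.range n)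
        (by intro t ht; simp at ht; simpa using ht)
        (by intro t₁ _ t₂ _ he; exact Fin.ext he)
      simpa using this
    have hScard : (Finset.univ \ T).card = Fintype.card M - T.card := by
      rw [Finset.card_sdiff_of_subset (Finset.subset_univ _), Finset.card_univ]
    have hS : (Finset.univ \ T).Nonempty := Finset.card_pos.1 (by omega)
    have hdrop : (List.finRange m).drop n = ⟨n, hnm⟩ :: (List.finRange m).drop (n+1) := by
      rw [List.drop_eq_getElem_cons (by simpa using hnm)]
      congr
      simp
    have hbn_mem : b ⟨n, hnm⟩ ∈ Finset.univ \ T := by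
      rw [Finset.mem_sdiff]
      refine ⟨Finset.mem_univ _, fun hmem => ?_⟩
      rw [hT] at hmem
      obtain ⟨t, htmem, hbt⟩ := Finset.mem_image.1 hmem
      rw [Finset.mem_filter] at htmem
      have het := hb.1 hbt
      rw [het] at htmem
      exact absurd htmem.2 (by simp)
    have hmax : fmax ord (Q ⟨n, hnm⟩) (Finset.univ \ T) hS = b ⟨n, hnm⟩ := by
      refine @le_antisymm M (ord (Q ⟨n, hnm⟩)).toPartialOrder _ _ ?_ (le_fmax ord hS hbn_mem)
      refine @Finset.max'_le M (ord (Q ⟨n, hnm⟩)) _ hS _ ?_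
      intro u hu
      rw [Finset.mem_sdiff, hT] at hu
      by_cases hub : u = b ⟨n, hnm⟩
      · exact hub ▸ @le_refl M (ord (Q ⟨n, hnm⟩)).toPreorder _
      · refine @le_of_lt M (ord (Q ⟨n, hnm⟩)).toPreorder _ _ (hb.2 ⟨n, hnm⟩ u ?_ hub)
        intro t ht hbt
        exact hu.2 (Finset.mem_image.2 ⟨t, Finset.mem_filter.2
          ⟨Finset.mem_univ t, (Fin.lt_def.mp ht : t.val < n)⟩, hbt⟩)
    have herase : (Finset.univ \ T).erase (b ⟨n, hnm⟩) =
        Finset.univ \ (Finset.univ.filter (fun t : Fin m => t.val < n + 1)).image b := by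
      ext u
      rw [Finset.mem_erase, Finset.mem_sdiff, Finset.mem_sdiff, hT]
      constructor
      · rintro ⟨hne, _, hu⟩
        refine ⟨Finset.mem_univ _, fun hmem => ?_⟩
        obtain ⟨t, htmem, hbt⟩ := Finset.mem_image.1 hmem
        rw [Finset.mem_filter] at htmem
        rcases Nat.lt_or_ge t.val n with hlt | hge
        · exact hu (Finset.mem_image.2 ⟨t, Finset.mem_filter.2 ⟨Finset.mem_univ t, hlt⟩, hbt⟩)
        · have htn : t = ⟨n, hnm⟩ := Fin.ext (show t.val = n by
            have := htmem.2
            omega)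
          exact hne (by rw [← htn, hbt])
      · rintro ⟨_, hu⟩
        refine ⟨fun he => hu ?_, Finset.mem_univ _, fun hmem => hu ?_⟩
        · exact Finset.mem_image.2 ⟨⟨n, hnm⟩, Finset.mem_filter.2
            ⟨Finset.mem_univ _, by simp⟩, he.symm⟩
        · obtain ⟨t, htmem, hbt⟩ := Finset.mem_image.1 hmem
          rw [Finset.mem_filter] at htmem
          exact Finset.mem_image.2 ⟨t, Finset.mem_filter.2
            ⟨Finset.mem_univ t, by
              have := htmem.2
              omega⟩, hbt⟩
    rw [hdrop, List.map_cons, List.map_cons, lg_cons ord hS, hmax, herase,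
      ih (n+1) (by omega)]

lemma mem_lplate_map (Q : Fin m → Fin k) (b : Fin m → M) (j : Fin k) :
    ∀ (l : List (Fin m)) (u : M),
      u ∈ lplate (List.map Q l) (List.map b l) j ↔ ∃ t ∈ l, Q t = j ∧ b t = u := by
  intro l
  induction l with
  | nil => intro u; simp
  | cons t l ih =>
    intro u
    rw [List.map_cons, List.map_cons, lplate_cons]
    by_cases hq : Q t = j
    · rw [if_pos hq]
      simp only [Finset.mem_insert, ih, List.mem_cons]
      constructor
      · rintro (rfl | ⟨t', ht', hq', hb'⟩)
        · exact ⟨t, Or.inl rfl, hq, rfl⟩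
        · exact ⟨t', Or.inr ht', hq', hb'⟩
      · rintro ⟨t', (rfl | ht'), hq', hb'⟩
        · exact Or.inl hb'.symm
        · exact Or.inr ⟨t', ht', hq', hb'⟩
    · rw [if_neg hq]
      simp only [ih, List.mem_cons]
      constructor
      · rintro ⟨t', ht', hq', hb'⟩
        exact ⟨t', Or.inr ht', hq', hb'⟩
      · rintro ⟨t', (rfl | ht'), hq', hb'⟩
        · exact absurd hq' hq
        · exact ⟨t', ht', hq', hb'⟩

lemma plate_eq_lplate_lg (hm : m ≤ Fintype.card M) (Q : Fin m → Fin k)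
    (ord : Fin k → LinearOrder M) (b : Fin m → M) (hb : IsGreedy Q ord b) (j : Fin k) :
    plate Q b j = lplate (List.map Q (List.finRange m))
      (lg ord (List.map Q (List.finRange m)) Finset.univ) j := by
  have h0 := greedy_eq_lg hm Q ord b hb m 0 (by omega)
  simp only [List.drop_zero] at h0
  have hT0 : (Finset.univ.filter (fun t : Fin m => t.val < 0)).image b = (∅ : Finset M) := by
    simp
  rw [hT0, Finset.sdiff_empty] at h0
  rw [h0]
  ext u
  rw [mem_lplate_map]
  simp only [plate, Finset.mem_image, Finset.mem_filter, Finset.mem_univ, true_and]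
  constructor
  · rintro ⟨t, hq, hb'⟩
    exact ⟨t, List.mem_finRange t, hq, hb'⟩
  · rintro ⟨t, _, hq, hb'⟩
    exact ⟨t, hq, hb'⟩
end


/-- in the all-knight game with turn order `P`, every optimal play
divides the food exactly as the greedy (all-lout) play of the game with
reversed turn order `Q t = P (m + 1 - t)`. -/
theorem knights_eq_reversed_louts {M : Type*} [Fintype M] [DecidableEq M] {m k : ℕ}
    (hm : m ≤ Fintype.card M) (P : Fin m → Fin k) (ord : Fin k → LinearOrder M)
    (big : Fin k → (Fin m → M) → (Fin m → M) → Prop)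
    (hirr : ∀ i (a : Fin m → M), Function.Injective a → ¬ big i a a)
    (htrans : ∀ i (a b c : Fin m → M), Function.Injective a → Function.Injective b →
      Function.Injective c → big i a b → big i b c → big i a c)
    (hext : ∀ i (a b : Fin m → M), Function.Injective a → Function.Injective b →
      KnightLT P ord i a b → big i a b)
    (b : Fin m → M) (hb : IsGreedy (P ∘ Fin.rev) ord b)
    (a : Fin m → M) (ha : OptimalPlay (fun t => big (P t)) a) :
    ∀ i : Fin k, plate P a i = plate (P ∘ Fin.rev) b i := by
  intro i
  obtain ⟨s, hs, rfl⟩ := ha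
  have h0 := claimB hm P ord big hext s hs m [] List.nodup_nil (by simp) i
  rw [List.length_nil, tailPlate_zero] at h0
  have hrev : revMov P 0 = List.map (P ∘ Fin.rev) (List.finRange m) := by
    unfold revMov
    rw [List.drop_zero, List.finRange_reverse, List.map_map]
  have hset : (Finset.univ \ ([] : List M).toFinset) = (Finset.univ : Finset M) := by simp
  rw [hrev, hset] at h0
  rw [h0, plate_eq_lplate_lg hm (P ∘ Fin.rev) ord b hb i]
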